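/- arXiv:math/0511430 — 2 statements merged into one kernel-verified Lean document; each statement's English description precedes it below -/
import Mathlib

section
/- In U(gl(2|1))[[t]] the elements T and T' are mutually inverse and satisfy Ohn-type relations with H₁: T·T' = T'·T = 1, [H₁, T] = T² − 1, and [H₁, T'] = T'² − 1; moreover [T, F₁] = (t/2)(H₁T + TH₁), [T', F₁] = −(t/2)(H₁T' + T'H₁), and [H₁, F₁] = −(1/2)(TF₁ + F₁T + T'F₁ + F₁T'). (This exhibits the embedding of the Jordanian algebra U_h(sl(2)) inside U_h(sl(2|1)).) -/
noncomputable section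

namespace SuperJordanian

open scoped BigOperators

/-- The generalized binomial coefficient `C(1/2, n)`. -/
def cHalf (n : ℕ) : ℂ :=
  (∏ i ∈ Finset.range n, ((1 : ℂ) / 2 - (i : ℂ))) / (n.factorial : ℂ)

/-- Parity for `gl(2|1)`: `p(i,j) = 1` iff exactly one of `i`, `j` equals the third index. -/
def par (i j : Fin 3) : ℕ :=
  if (i = 2 ∧ j ≠ 2) ∨ (i ≠ 2 ∧ j = 2) then 1 else 0

/-- The generator `e_{ij}` in the free algebra. -/
def gen (i j : Fin 3) : FreeAlgebra ℂ (Fin 3 × Fin 3) := FreeAlgebra.ι ℂ (i, j)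

/-- Defining relations of the enveloping algebra `U(gl(2|1))`:
`e_{ij} e_{kl} - (-1)^{p(i,j)p(k,l)} e_{kl} e_{ij}
  = δ_{jk} e_{il} - (-1)^{p(i,j)p(k,l)} δ_{li} e_{kj}`. -/
inductive Rel : FreeAlgebra ℂ (Fin 3 × Fin 3) → FreeAlgebra ℂ (Fin 3 × Fin 3) → Prop
  | mk (i j k l : Fin 3) :
      Rel (gen i j * gen k l - ((-1 : ℂ) ^ (par i j * par k l)) • (gen k l * gen i j))
        ((if j = k then gen i l else 0)
          - ((-1 : ℂ) ^ (par i j * par k l)) • (if l = i then gen k j else 0))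

/-- The enveloping algebra `U = U(gl(2|1))`. -/
abbrev U : Type := RingQuot Rel

/-- The image of `e_{ij}` in `U`. -/
def e (i j : Fin 3) : U := RingQuot.mkAlgHom ℂ Rel (gen i j)

/-- The formal power series ring `U[[t]]`. -/
abbrev V : Type := PowerSeries U

/-- The central formal variable `t`. -/
def tv : V := PowerSeries.X

/-- The inclusion `U → U[[t]]` as constant power series. -/
def C : U →+* V := PowerSeries.C

def e₁ : U := e 0 1
def f₁ : U := e 1 0
def h₁ : U := e 0 0 - e 1 1
def e₂ : U := e 1 2
def f₂ : U := e 2 1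
def h₂ : U := e 1 1 + e 2 2
def e₃ : U := e 0 2
def f₃ : U := e 2 0
def h₃ : U := h₁ + h₂

/-- `s = Σ_{n ≥ 0} C(1/2, n) t^{2n} e₁^{2n}`, so that `s² = 1 + t² e₁²`. -/
def s : V := PowerSeries.mk fun m => if m % 2 = 0 then cHalf (m / 2) • (e₁ ^ m) else 0

def T : V := tv * C e₁ + s
def T' : V := -(tv * C e₁) + s
def H₁ : V := s * C h₁
def F₁ : V := C f₁ - ((1 : ℂ) / 4) • (tv ^ 2 * C (e₁ * (h₁ ^ 2 - 1)))
def H₂ : V := C h₂ - ((1 : ℂ) / 2) • (tv ^ 2 * C (e₁ ^ 2 * h₁))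
def E₂ : V := C e₂ - ((1 : ℂ) / 4) • (tv ^ 2 * C (e₁ * e₃ * (2 * h₁ + 1)))
def F₂ : V := C f₂
def H₃ : V := C h₃ + ((1 : ℂ) / 2) • (tv ^ 2 * C (e₁ ^ 2 * h₁))
def E₃ : V := C e₃
def F₃ : V := C f₃ + ((1 : ℂ) / 4) • (tv ^ 2 * C (e₁ * f₂ * (2 * h₁ + 1)))

/-- Commutator `[a, b] = ab - ba`. -/
def br (a b : V) : V := a * b - b * a

/-- Anticommutator `{a, b} = ab + ba`. -/
def ac (a b : V) : V := a * b + b * a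

/-!
Put `x = t e₁` and let `ψ : ℂ⟦X⟧ → U⟦t⟧` be the substitution `X ↦ x`, so that `s = ψ g` with
`g = √(1 + X²)`, `T = ψ (X + g)` and `T' = ψ (g - X)`; in particular `T T' = ψ (g² - X²) = 1`.
Because `[h₁, e₁] = 2 e₁` and `[e₁, f₁] = h₁`, the operator `ad h₁` acts on the image of `ψ` as
`ψ ∘ 2X d/dX`, and moving `ψ p` past `f₁` produces `t (ψ (p') h₁ + ψ (X p''))`. Writing
`X = sinh u`, `g = cosh u`, the operator `θ = g d/dX` (`arsinhDeriv`) is `d/du`, and these rules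
combine into `[H₁, ψ p] = 2 x ψ (θ p)` and `[ψ p, F₁] = (t/2) {H₁, ψ (θ p)}`. As `T = e^u` and
`T' = e^{-u}` satisfy `θ T = T` and `θ T' = -T'`, the first six relations follow. For the last
one, `T + T' = 2 s` reduces it to `[H₁, F₁] = -{s, F₁}`, which follows from
`[h₁, F₁] = -2 F₁ - t x (h₁² - 1)` and `[s, F₁] = t x s (h₁ + 1)`.
-/

open PowerSeries

section MapRescale

variable {R A : Type*} [CommRing R] [Ring A] [Algebra R A]

/-- `p(X) ↦ p(a X)`; unlike `PowerSeries.rescale`, this allows a noncommutative `A`. -/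
def mapRescale (a : A) : R⟦X⟧ →ₐ[R] A⟦X⟧ where
  toFun p := mk fun n => coeff n p • a ^ n
  map_one' := by
    ext n
    rw [coeff_mk, coeff_one, coeff_one]
    split_ifs with h <;> simp [h]
  map_mul' p q := by
    ext n
    rw [coeff_mk, coeff_mul, coeff_mul, Finset.sum_smul]
    refine Finset.sum_congr rfl fun ij hij => ?_
    rw [coeff_mk, coeff_mk, smul_mul_smul_comm, ← pow_add,
      Finset.HasAntidiagonal.mem_antidiagonal.mp hij]
  map_zero' := by ext; simp
  map_add' p q := by ext; simp [add_smul]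
  commutes' r := by
    ext n
    rw [coeff_mk, PowerSeries.algebraMap_apply, PowerSeries.algebraMap_apply, coeff_C, coeff_C]
    split_ifs with h <;> simp [h, Algebra.smul_def]

theorem coeff_mapRescale (a : A) (p : R⟦X⟧) (n : ℕ) :
    coeff n (mapRescale a p) = coeff n p • a ^ n :=
  coeff_mk n fun n => coeff n p • a ^ n

theorem mapRescale_X (a : A) : mapRescale a (X : R⟦X⟧) = X * PowerSeries.C a := by
  ext n
  rcases n with _ | _ | n <;> simp [coeff_mapRescale, coeff_X]

theorem commute_mapRescale (a : A) (p q : R⟦X⟧) :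
    Commute (mapRescale a p) (mapRescale a q) := by
  rw [Commute, SemiconjBy, ← map_mul, ← map_mul, mul_comm]

end MapRescale

section Sl2

variable {A : Type*} [Ring A] {a h f : A}

theorem mul_pow_eq_pow_mul_add (hha : h * a = a * h + 2 • a) (n : ℕ) :
    h * a ^ n = a ^ n * h + (2 * n) • a ^ n := by
  induction n with
  | zero => simp
  | succ n ih =>
    rw [pow_succ, ← mul_assoc, ih, add_mul, mul_assoc, hha, mul_add, ← mul_assoc, smul_mul_assoc,
      mul_smul_comm, ← pow_succ]
    module

theorem pow_succ_mul_eq_mul_pow_succ_add (hha : h * a = a * h + 2 • a)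
    (haf : a * f = f * a + h) (n : ℕ) :
    a ^ (n + 1) * f = f * a ^ (n + 1) + (n + 1) • (a ^ n * h) + ((n + 1) * n) • a ^ n := by
  induction n with
  | zero => simp [haf]
  | succ n ih =>
    rw [pow_succ', mul_assoc, ih, mul_add, mul_add, ← mul_assoc, haf, add_mul, mul_assoc f,
      ← pow_succ', mul_smul_comm, mul_smul_comm, ← mul_assoc, ← pow_succ',
      mul_pow_eq_pow_mul_add hha]
    module

end Sl2

theorem coeff_X_mul_derivative {R : Type*} [CommRing R] (p : R⟦X⟧) (n : ℕ) :
    coeff n (X * d⁄dX R p) = n * coeff n p := by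
  rcases n with _ | n
  · simp
  · rw [coeff_succ_X_mul, coeff_derivative]
    push_cast
    ring

section MapRescaleSl2

variable {R A : Type*} [CommRing R] [Ring A] [Algebra R A] {a h f : A}

theorem C_mul_mapRescale (hha : h * a = a * h + 2 • a) (p : R⟦X⟧) :
    PowerSeries.C h * mapRescale a p =
      mapRescale a p * PowerSeries.C h + mapRescale a (2 * X * d⁄dX R p) := by
  ext n
  rw [map_add, coeff_C_mul, coeff_mul_C, coeff_mapRescale, coeff_mapRescale, mul_assoc,
    ← map_ofNat (PowerSeries.C (R := R)) 2, coeff_C_mul, coeff_X_mul_derivative, mul_smul_comm,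
    mul_pow_eq_pow_mul_add hha, smul_mul_assoc]
  module

theorem mapRescale_mul_C (hha : h * a = a * h + 2 • a) (haf : a * f = f * a + h) (p : R⟦X⟧) :
    mapRescale a p * PowerSeries.C f = PowerSeries.C f * mapRescale a p +
      X * (mapRescale a (d⁄dX R p) * PowerSeries.C h + mapRescale a (X * d⁄dX R (d⁄dX R p))) := by
  ext n
  rcases n with _ | n
  · rw [map_add, coeff_zero_X_mul, add_zero, coeff_mul_C, coeff_C_mul, coeff_mapRescale,
      pow_zero, smul_mul_assoc, mul_smul_comm, one_mul, mul_one]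
  rw [map_add, coeff_mul_C, coeff_C_mul, coeff_succ_X_mul, map_add, coeff_mul_C,
    coeff_mapRescale, coeff_mapRescale, coeff_mapRescale, coeff_X_mul_derivative, coeff_derivative,
    smul_mul_assoc, smul_mul_assoc, pow_succ_mul_eq_mul_pow_succ_add hha haf, mul_smul_comm]
  module

end MapRescaleSl2

def sqrtOneAddXSq : ℂ⟦X⟧ := expand 2 two_ne_zero (binomialSeries ℂ (1 / 2 : ℂ))

theorem cHalf_eq_choose (n : ℕ) : cHalf n = Ring.choose (1 / 2 : ℂ) n := by
  rw [Ring.choose_eq_smul, cHalf, ← Polynomial.aeval_eq_smeval, Polynomial.aeval_def,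
    Polynomial.eval₂_eq_eval_map, descPochhammer_map, descPochhammer_eval_eq_prod_range,
    smul_eq_mul, div_eq_inv_mul]

theorem coeff_sqrtOneAddXSq (n : ℕ) :
    coeff n sqrtOneAddXSq = if n % 2 = 0 then cHalf (n / 2) else 0 := by
  simp [sqrtOneAddXSq, coeff_expand, Nat.dvd_iff_mod_eq_zero, cHalf_eq_choose]

theorem sqrtOneAddXSq_sq : sqrtOneAddXSq ^ 2 = 1 + X ^ 2 := by
  rw [sqrtOneAddXSq, ← map_pow, sq, ← binomialSeries_add, add_halves,
    show (1 : ℂ) = ((1 : ℕ) : ℂ) by norm_num, binomialSeries_nat]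
  simp [expand_X]

theorem sqrtOneAddXSq_mul_derivative : sqrtOneAddXSq * d⁄dX ℂ sqrtOneAddXSq = X := by
  have h := congrArg (d⁄dX ℂ) sqrtOneAddXSq_sq
  rw [derivative_pow, map_add, derivative_one, derivative_pow, derivative_X] at h
  have h2 : (2 : ℂ⟦X⟧) * (sqrtOneAddXSq * d⁄dX ℂ sqrtOneAddXSq - X) = 0 := by
    linear_combination h
  rw [mul_eq_zero, sub_eq_zero] at h2
  exact h2.resolve_left fun h => by simpa [map_ofNat] using congrArg constantCoeff h

/-- Differentiation in `u`, where `X = sinh u` and `sqrtOneAddXSq = cosh u`. -/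
def arsinhDeriv (p : ℂ⟦X⟧) : ℂ⟦X⟧ := sqrtOneAddXSq * d⁄dX ℂ p

theorem arsinhDeriv_X : arsinhDeriv X = sqrtOneAddXSq := by
  rw [arsinhDeriv, derivative_X, mul_one]

theorem arsinhDeriv_sqrtOneAddXSq : arsinhDeriv sqrtOneAddXSq = X :=
  sqrtOneAddXSq_mul_derivative

theorem arsinhDeriv_X_add : arsinhDeriv (X + sqrtOneAddXSq) = X + sqrtOneAddXSq := by
  rw [arsinhDeriv, map_add, mul_add, ← arsinhDeriv, ← arsinhDeriv, arsinhDeriv_X,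
    arsinhDeriv_sqrtOneAddXSq, add_comm]

theorem arsinhDeriv_sub_X : arsinhDeriv (sqrtOneAddXSq - X) = -(sqrtOneAddXSq - X) := by
  rw [arsinhDeriv, map_sub, mul_sub, ← arsinhDeriv, ← arsinhDeriv, arsinhDeriv_X,
    arsinhDeriv_sqrtOneAddXSq, neg_sub]

theorem mul_arsinhDeriv (p : ℂ⟦X⟧) :
    sqrtOneAddXSq * arsinhDeriv p = (1 + X ^ 2) * d⁄dX ℂ p := by
  rw [arsinhDeriv, ← mul_assoc, ← sq, sqrtOneAddXSq_sq]

theorem arsinhDeriv_arsinhDeriv (p : ℂ⟦X⟧) :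
    arsinhDeriv (arsinhDeriv p) = X * d⁄dX ℂ p + (1 + X ^ 2) * d⁄dX ℂ (d⁄dX ℂ p) := by
  rw [arsinhDeriv, arsinhDeriv, Derivation.leibniz, smul_eq_mul, smul_eq_mul, mul_add,
    ← mul_assoc, ← mul_assoc, ← sq, sqrtOneAddXSq_sq, mul_assoc sqrtOneAddXSq,
    mul_comm (d⁄dX ℂ p), ← mul_assoc, sqrtOneAddXSq_mul_derivative]
  ring

theorem C_quarter_mul_four : PowerSeries.C (1 / 4 : ℂ) * 4 = 1 := by
  rw [← map_ofNat PowerSeries.C 4, ← map_mul]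
  norm_num

theorem e_mul_e_of_par_mul_eq_zero (i j k l : Fin 3) (hp : par i j * par k l = 0) :
    e i j * e k l =
      e k l * e i j + ((if j = k then e i l else 0) - if l = i then e k j else 0) := by
  have h := RingQuot.mkAlgHom_rel ℂ (Rel.mk i j k l)
  simp only [hp, pow_zero, one_smul, map_sub, map_mul, apply_ite (RingQuot.mkAlgHom ℂ Rel),
    map_zero] at h
  rw [← sub_eq_iff_eq_add']
  exact h

theorem h₁_mul_e₁ : h₁ * e₁ = e₁ * h₁ + 2 • e₁ := by
  simp only [h₁, e₁, sub_mul, mul_sub, e_mul_e_of_par_mul_eq_zero 0 0 0 1 (by decide),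
    e_mul_e_of_par_mul_eq_zero 1 1 0 1 (by decide)]
  simp only [Fin.isValue, ↓reduceIte, one_ne_zero, sub_zero, zero_sub, two_smul]
  abel

theorem e₁_mul_f₁ : e₁ * f₁ = f₁ * e₁ + h₁ := by
  simp only [h₁, e₁, f₁, e_mul_e_of_par_mul_eq_zero 0 1 1 0 (by decide)]
  simp

theorem h₁_mul_f₁ : h₁ * f₁ = f₁ * h₁ - 2 • f₁ := by
  simp only [h₁, f₁, sub_mul, mul_sub, e_mul_e_of_par_mul_eq_zero 0 0 1 0 (by decide),
    e_mul_e_of_par_mul_eq_zero 1 1 1 0 (by decide)]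
  simp only [Fin.isValue, zero_ne_one, ↓reduceIte, zero_sub, sub_zero, two_smul]
  abel

local notation "ψ" => mapRescale (R := ℂ) e₁

theorem tv_commute (a : V) : Commute tv a := (commute_X a).symm

theorem mapRescale_X_eq : ψ X = tv * C e₁ := mapRescale_X e₁

theorem s_eq : s = ψ sqrtOneAddXSq := by
  ext n
  rw [s, coeff_mk, coeff_mapRescale, coeff_sqrtOneAddXSq]
  split_ifs <;> simp

theorem T_eq : T = ψ (X + sqrtOneAddXSq) := by
  rw [T, map_add, mapRescale_X_eq, s_eq]

theorem T'_eq : T' = ψ (sqrtOneAddXSq - X) := by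
  rw [T', map_sub, mapRescale_X_eq, s_eq, neg_add_eq_sub]

theorem T_add_T' : T + T' = 2 * s := by
  rw [T, T', two_mul]
  abel

theorem H₁_eq : H₁ = ψ sqrtOneAddXSq * C h₁ := by
  rw [H₁, s_eq]

theorem F₁_eq : F₁ = C f₁ - tv * (ψ (PowerSeries.C (1 / 4 : ℂ) * X) * (C h₁ ^ 2 - 1)) := by
  rw [F₁, ← smul_eq_C_mul, map_smul, mapRescale_X_eq, smul_mul_assoc, mul_smul_comm, map_mul,
    map_sub, map_pow, map_one, sq tv, mul_assoc, mul_assoc]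

theorem C_h₁_mul_mapRescale (p : ℂ⟦X⟧) :
    C h₁ * ψ p = ψ p * C h₁ + ψ (2 * X * d⁄dX ℂ p) :=
  C_mul_mapRescale h₁_mul_e₁ p

theorem mapRescale_mul_C_f₁ (p : ℂ⟦X⟧) :
    ψ p * C f₁ = C f₁ * ψ p + tv * (ψ (d⁄dX ℂ p) * C h₁ + ψ (X * d⁄dX ℂ (d⁄dX ℂ p))) :=
  mapRescale_mul_C h₁_mul_e₁ e₁_mul_f₁ p

theorem br_H₁_mapRescale (p : ℂ⟦X⟧) : br H₁ (ψ p) = ψ (2 * X * arsinhDeriv p) := by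
  rw [br, H₁_eq, mul_assoc, C_h₁_mul_mapRescale, mul_add, ← mul_assoc, ← mul_assoc,
    (commute_mapRescale e₁ p sqrtOneAddXSq).eq, add_sub_cancel_left, ← map_mul, arsinhDeriv]
  ring_nf

theorem ac_H₁_mapRescale (q : ℂ⟦X⟧) :
    ac H₁ (ψ q) = 2 * (ψ (sqrtOneAddXSq * q) * C h₁ + ψ (X * arsinhDeriv q)) := by
  rw [ac, H₁_eq, mul_assoc, C_h₁_mul_mapRescale, mul_add, ← mul_assoc, ← mul_assoc,
    (commute_mapRescale e₁ q sqrtOneAddXSq).eq, ← map_mul, ← map_mul, arsinhDeriv,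
    show sqrtOneAddXSq * (2 * X * d⁄dX ℂ q) = 2 * (X * (sqrtOneAddXSq * d⁄dX ℂ q)) by ring,
    map_mul _ (2 : ℂ⟦X⟧), map_ofNat]
  noncomm_ring

theorem br_mapRescale_F₁ (p : ℂ⟦X⟧) :
    br (ψ p) F₁ = tv * (ψ (sqrtOneAddXSq * arsinhDeriv p) * C h₁ +
      ψ (X * arsinhDeriv (arsinhDeriv p))) := by
  have hlin : ψ (sqrtOneAddXSq * arsinhDeriv p) = ψ (d⁄dX ℂ p) +
      2 * (ψ (PowerSeries.C (1 / 4 : ℂ) * X) * ψ (2 * X * d⁄dX ℂ p)) := by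
    rw [mul_arsinhDeriv, ← map_mul, ← map_ofNat ψ 2, ← map_mul, ← map_add]
    congr 1
    linear_combination (-X ^ 2 * d⁄dX ℂ p) * C_quarter_mul_four
  have hconst : ψ (X * arsinhDeriv (arsinhDeriv p)) = ψ (X * d⁄dX ℂ (d⁄dX ℂ p)) +
      ψ (PowerSeries.C (1 / 4 : ℂ) * X) * ψ (2 * X * d⁄dX ℂ (2 * X * d⁄dX ℂ p)) := by
    rw [arsinhDeriv_arsinhDeriv, ← map_mul, ← map_add]
    congr 1
    simp only [two_mul, map_add, Derivation.leibniz, derivative_X, smul_eq_mul]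
    linear_combination (-X ^ 2 * d⁄dX ℂ p - X ^ 3 * d⁄dX ℂ (d⁄dX ℂ p)) * C_quarter_mul_four
  rw [br, F₁_eq, hlin, hconst]
  linear_combination (norm := skip) mapRescale_mul_C_f₁ p
    + (tv_commute (ψ p)).eq * (ψ (PowerSeries.C (1 / 4 : ℂ) * X) * (C h₁ ^ 2 - 1))
    - tv * (commute_mapRescale e₁ p (PowerSeries.C (1 / 4 : ℂ) * X)).eq * (C h₁ ^ 2 - 1)
    + tv * ψ (PowerSeries.C (1 / 4 : ℂ) * X) * (C_h₁_mul_mapRescale p * C h₁)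
    + tv * ψ (PowerSeries.C (1 / 4 : ℂ) * X) * C h₁ * C_h₁_mul_mapRescale p
    + tv * ψ (PowerSeries.C (1 / 4 : ℂ) * X) * C_h₁_mul_mapRescale (2 * X * d⁄dX ℂ p)
  simp only [sq, two_mul, mul_add, add_mul, mul_sub, sub_mul, mul_one, mul_assoc]
  abel

theorem br_mapRescale_F₁_eq_smul (p : ℂ⟦X⟧) :
    br (ψ p) F₁ = (1 / 2 : ℂ) • (tv * ac H₁ (ψ (arsinhDeriv p))) := by
  rw [ac_H₁_mapRescale, br_mapRescale_F₁, two_mul (_ + _), ← two_smul ℂ, mul_smul_comm,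
    smul_smul]
  norm_num

theorem br_s_F₁ : br s F₁ = tv * (ψ X * s * (C h₁ + 1)) := by
  rw [s_eq, br_mapRescale_F₁, arsinhDeriv_sqrtOneAddXSq, arsinhDeriv_X, ← map_mul, mul_comm X]
  simp only [mul_add, mul_one]

theorem br_C_h₁_F₁ : br (C h₁) F₁ = -(2 * F₁) - tv * (ψ X * (C h₁ ^ 2 - 1)) := by
  have hhf : C h₁ * C f₁ = C f₁ * C h₁ - 2 * C f₁ := by
    rw [← map_mul, h₁_mul_f₁, map_sub, map_mul, map_nsmul, nsmul_eq_mul, Nat.cast_ofNat]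
  have hhr : C h₁ * ψ (PowerSeries.C (1 / 4 : ℂ) * X) =
      ψ (PowerSeries.C (1 / 4 : ℂ) * X) * C h₁ + 2 * ψ (PowerSeries.C (1 / 4 : ℂ) * X) := by
    rw [C_h₁_mul_mapRescale, ← map_ofNat ψ 2, ← map_mul, Derivation.leibniz, derivative_X,
      derivative_C, smul_zero, add_zero, smul_eq_mul, mul_one]
    ring_nf
  have h4 : ψ X = 4 • ψ (PowerSeries.C (1 / 4 : ℂ) * X) := by
    rw [← map_nsmul, nsmul_eq_mul, Nat.cast_ofNat, ← mul_assoc, mul_comm 4, C_quarter_mul_four,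
      one_mul]
  rw [br, F₁_eq, h4]
  linear_combination (norm := skip) hhf
    + (tv_commute (C h₁)).eq * (ψ (PowerSeries.C (1 / 4 : ℂ) * X) * (C h₁ ^ 2 - 1))
    - tv * hhr * (C h₁ ^ 2 - 1)
  simp only [sq, two_mul, mul_add, add_mul, mul_sub, sub_mul, mul_one, mul_assoc, smul_mul_assoc,
    mul_smul_comm]
  abel

theorem br_H₁_F₁ : br H₁ F₁ = -ac s F₁ := by
  have hcomm : s * (tv * ψ X) = tv * ψ X * s := by
    rw [← mul_assoc, ← (tv_commute s).eq, mul_assoc, mul_assoc, s_eq,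
      (commute_mapRescale e₁ sqrtOneAddXSq X).eq]
  have hh := br_C_h₁_F₁
  have hs := br_s_F₁
  rw [br] at hh hs ⊢
  rw [H₁, ac]
  -- `simp` and `rw` cannot apply `mul_neg` on `V` (the instances reach `U` through `RingQuot`),
  -- so the needed instance of `mul_neg` is passed as a term.
  linear_combination (norm := skip) s * hh + hs * C h₁ - hs - hcomm * (C h₁ ^ 2 - 1)
    + mul_neg s (2 * F₁)
  simp only [sq, two_mul, mul_add, add_mul, mul_sub, sub_mul, mul_one, mul_assoc]
  abel

/-- Ohn-type relations of `T`, `T'`, `H₁`, `F₁` in `U(gl(2|1))[[t]]`. -/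
theorem statement0 :
    T * T' = 1 ∧ T' * T = 1 ∧
    br H₁ T = T ^ 2 - 1 ∧
    br H₁ T' = T' ^ 2 - 1 ∧
    br T F₁ = ((1 : ℂ) / 2) • (tv * (H₁ * T + T * H₁)) ∧
    br T' F₁ = -(((1 : ℂ) / 2) • (tv * (H₁ * T' + T' * H₁))) ∧
    br H₁ F₁ = -(((1 : ℂ) / 2) • (T * F₁ + F₁ * T + T' * F₁ + F₁ * T')) := by
  have hTT' : (X + sqrtOneAddXSq) * (sqrtOneAddXSq - X) = 1 := by
    linear_combination sqrtOneAddXSq_sq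
  have hsum : T * F₁ + F₁ * T + T' * F₁ + F₁ * T' = 2 * ac s F₁ := by
    linear_combination (norm := skip) T_add_T' * F₁ + F₁ * T_add_T'
    simp only [ac, two_mul, add_mul, mul_add]
    abel
  refine ⟨?_, ?_, ?_, ?_, ?_, ?_, ?_⟩
  · rw [T_eq, T'_eq, ← map_mul, hTT', map_one]
  · rw [T_eq, T'_eq, ← map_mul, mul_comm, hTT', map_one]
  · rw [T_eq, br_H₁_mapRescale, arsinhDeriv_X_add, ← map_pow, ← map_one ψ, ← map_sub]
    congr 1
    linear_combination -sqrtOneAddXSq_sq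
  · rw [T'_eq, br_H₁_mapRescale, arsinhDeriv_sub_X, ← map_pow, ← map_one ψ, ← map_sub]
    congr 1
    linear_combination -sqrtOneAddXSq_sq
  · rw [T_eq, br_mapRescale_F₁_eq_smul, arsinhDeriv_X_add, ac]
  · rw [T'_eq, br_mapRescale_F₁_eq_smul, arsinhDeriv_sub_X, map_neg, ac, mul_neg H₁,
      neg_mul _ H₁, ← neg_add, mul_neg tv, smul_neg]
  · rw [hsum, br_H₁_F₁, two_mul (ac s F₁), ← two_smul ℂ, smul_smul]
    norm_num

end SuperJordanian
end
end

section
/- In U(gl(2|1))[[t]] the deformed generators reproduce the classical root-vector definitions: F₂F₁ − F₁F₂ = F₃ and F₁E₃ − E₃F₁ = E₂. -/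
noncomputable section

namespace SuperJordanian

open scoped BigOperators

/-! The `t⁰` parts of both identities are defining relations of `U`; as `t` is central, the `t²`
parts are commutators `[e₁ (h₁² - 1), x]` in `U` with `x = f₂` or `x = e₃`. Both commute with `e₁`
and satisfy `[h₁, x] = x`, i.e. `x h₁ = (h₁ - 1) x`, so
`[e₁ (h₁² - 1), x] = e₁ ((h₁² - 1) - ((h₁ - 1)² - 1)) x = e₁ (2 h₁ - 1) x = e₁ x (2 h₁ + 1)`. -/

section Commutators

variable {R : Type*} [Ring R]

theorem lie_mul_sq_sub_one {x a h : R} (hax : ⁅a, x⁆ = 0) (hhx : ⁅h, x⁆ = x) :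
    ⁅a * (h ^ 2 - 1), x⁆ = a * x * (2 * h + 1) := by
  have hxa : SemiconjBy x a a := (commute_iff_lie_eq.mpr hax).symm
  have hxh : SemiconjBy x h (h - 1) := by
    rw [SemiconjBy, sub_mul, one_mul]
    exact eq_sub_of_add_eq (sub_eq_iff_eq_add'.mp hhx).symm
  have hpoly : SemiconjBy x (a * (h ^ 2 - 1)) (a * ((h - 1) ^ 2 - 1)) :=
    hxa.mul_right ((hxh.pow_right 2).sub_right (SemiconjBy.one_right x))
  have hlin : SemiconjBy x (2 * h + 1) (2 * (h - 1) + 1) :=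
    (((Commute.ofNat_right x 2).semiconjBy).mul_right hxh).add_right (SemiconjBy.one_right x)
  rw [Ring.lie_def, hpoly.eq, mul_assoc a x, hlin.eq]
  noncomm_ring

end Commutators

section PowerSeries

open PowerSeries (X commute_X)

variable {k R : Type*} [CommRing k] [Ring R] [Algebra k R]

theorem lie_C_sub_smul_X_sq_mul_C_C (u v w : R) (c : k) :
    ⁅PowerSeries.C v - c • (X ^ 2 * PowerSeries.C w), PowerSeries.C u⁆
      = PowerSeries.C ⁅v, u⁆ - c • (X ^ 2 * PowerSeries.C ⁅w, u⁆) := by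
  have hX : PowerSeries.C u * X ^ 2 = X ^ 2 * PowerSeries.C u :=
    ((commute_X (PowerSeries.C u)).pow_right 2).eq
  simp only [Ring.lie_def, map_sub, map_mul, mul_sub, sub_mul, mul_smul_comm, smul_mul_assoc,
    smul_sub, ← mul_assoc, hX]
  simp only [mul_assoc]
  abel

end PowerSeries

theorem lie_e_e_of_par_mul_eq_zero (i j k l : Fin 3) (hp : par i j * par k l = 0) :
    ⁅e i j, e k l⁆ = (if j = k then e i l else 0) - (if l = i then e k j else 0) := by
  have h := RingQuot.mkAlgHom_rel ℂ (Rel.mk i j k l)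
  simp only [hp, pow_zero, one_smul, map_sub, map_mul, apply_ite (RingQuot.mkAlgHom ℂ Rel),
    map_zero] at h
  exact h

theorem lie_f₁_f₂ : ⁅f₁, f₂⁆ = -f₃ := by
  simpa [f₁, f₂, f₃] using lie_e_e_of_par_mul_eq_zero 1 0 2 1 (by decide)

theorem lie_f₁_e₃ : ⁅f₁, e₃⁆ = e₂ := by
  simpa [f₁, e₂, e₃] using lie_e_e_of_par_mul_eq_zero 1 0 0 2 (by decide)

theorem lie_e₁_f₂ : ⁅e₁, f₂⁆ = 0 := by
  simpa [e₁, f₂] using lie_e_e_of_par_mul_eq_zero 0 1 2 1 (by decide)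

theorem lie_e₁_e₃ : ⁅e₁, e₃⁆ = 0 := by
  simpa [e₁, e₃] using lie_e_e_of_par_mul_eq_zero 0 1 0 2 (by decide)

theorem lie_h₁_left (x : U) : ⁅h₁, x⁆ = ⁅e 0 0, x⁆ - ⁅e 1 1, x⁆ := by
  simp only [Ring.lie_def, h₁, sub_mul, mul_sub]
  abel

theorem lie_h₁_f₂ : ⁅h₁, f₂⁆ = f₂ := by
  rw [lie_h₁_left, f₂, lie_e_e_of_par_mul_eq_zero 0 0 2 1 (by decide),
    lie_e_e_of_par_mul_eq_zero 1 1 2 1 (by decide)]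
  simp

theorem lie_h₁_e₃ : ⁅h₁, e₃⁆ = e₃ := by
  rw [lie_h₁_left, e₃, lie_e_e_of_par_mul_eq_zero 0 0 0 2 (by decide),
    lie_e_e_of_par_mul_eq_zero 1 1 0 2 (by decide)]
  simp

/-- the deformed generators reproduce the classical root-vector definitions. -/
theorem statement8 :
    F₂ * F₁ - F₁ * F₂ = F₃ ∧
    F₁ * E₃ - E₃ * F₁ = E₂ := by
  constructor
  · rw [← neg_sub, ← Ring.lie_def, F₁, F₂, F₃, C, tv, lie_C_sub_smul_X_sq_mul_C_C, lie_f₁_f₂,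
      lie_mul_sq_sub_one lie_e₁_f₂ lie_h₁_f₂, map_neg, neg_sub, sub_neg_eq_add, add_comm]
  · rw [← Ring.lie_def, F₁, E₃, E₂, C, tv, lie_C_sub_smul_X_sq_mul_C_C, lie_f₁_e₃,
      lie_mul_sq_sub_one lie_e₁_e₃ lie_h₁_e₃]

end SuperJordanian
end
end
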